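/- arXiv:math/9908090 — 2 statements merged into one kernel-verified Lean document; each statement's English description precedes it below -/
import Mathlib

section
/- For every 1 ≤ i ≤ n−1, the operators A_i and R_i have the same invariant vectors, namely the i-symmetric polynomials: for every f ∈ P_n, A_i(f) = f if and only if s_i(f) = f, and R_i(f) = f if and only if s_i(f) = f; that is, ker(A_i − id) = ker(R_i − id) = Λ_n(i). -/
open MvPolynomial

noncomputable section

/-- The ground field `F = ℚ(q)`, rational functions over `ℚ`. -/
abbrev F : Type := RatFunc ℚ

/-- The indeterminate `q`. -/
def q : F := RatFunc.X

/-- The polynomial ring `P_n = F[x_1, …, x_n]` (variables indexed `0, …, n-1`). -/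
abbrev Pn (n : ℕ) : Type := MvPolynomial (Fin n) F

/-- The adjacent transposition `s_i` swapping positions `i` and `i+1` (0-indexed). -/
def transp (n i : ℕ) (h : i + 1 < n) : Equiv.Perm (Fin n) :=
  Equiv.swap ⟨i, by omega⟩ ⟨i + 1, h⟩

/-- Multiplication by the variable `x_j`. -/
def Xop {n : ℕ} (j : Fin n) : Pn n →ₗ[F] Pn n := LinearMap.mulLeft F (X j)

/-- A family of candidate divided-difference operators. -/
abbrev DDFam (n : ℕ) := ∀ i : ℕ, i + 1 < n → (Pn n →ₗ[F] Pn n)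

/-- `dd` is the family of divided difference operators:
`(x_i - x_{i+1}) · ∂_i f = f - s_i f`.  This determines `dd` uniquely. -/
def IsDD {n : ℕ} (dd : DDFam n) : Prop :=
  ∀ (i : ℕ) (h : i + 1 < n) (f : Pn n),
    (X (⟨i, by omega⟩ : Fin n) - X ⟨i + 1, h⟩) * dd i h f
      = f - rename (⇑(transp n i h)) f

/-- The q-commutator operator `A_i = ∂_i ∘ X_i - q · X_i ∘ ∂_i`. -/
def Aop {n : ℕ} (dd : DDFam n) (i : ℕ) (h : i + 1 < n) : Pn n →ₗ[F] Pn n :=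
  dd i h ∘ₗ Xop ⟨i, by omega⟩ - q • (Xop (⟨i, by omega⟩ : Fin n) ∘ₗ dd i h)

/-- The operator `B_i = -(∂_i ∘ X_{i+1} - q · X_{i+1} ∘ ∂_i)`. -/
def Bop {n : ℕ} (dd : DDFam n) (i : ℕ) (h : i + 1 < n) : Pn n →ₗ[F] Pn n :=
  -(dd i h ∘ₗ Xop ⟨i + 1, h⟩ - q • (Xop (⟨i + 1, h⟩ : Fin n) ∘ₗ dd i h))

/-- Swap the exponents of `x_i` and `x_{i+1}` in a monomial exponent vector. -/
def swapIdx (n i : ℕ) (h : i + 1 < n) (d : Fin n →₀ ℕ) : Fin n →₀ ℕ :=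
  Finsupp.equivMapDomain (transp n i h) d

/-- Value of `R_i` on the monomial with exponent vector `d`. -/
def Rval {n : ℕ} (i : ℕ) (h : i + 1 < n) (d : Fin n →₀ ℕ) : Pn n :=
  if d ⟨i + 1, h⟩ < d ⟨i, by omega⟩ then q • monomial (swapIdx n i h d) (1 : F)
  else if d ⟨i, by omega⟩ < d ⟨i + 1, h⟩ then
    (1 - q) • monomial d (1 : F) + monomial (swapIdx n i h d) (1 : F)
  else monomial d (1 : F)

/-- The operator `R_i`, the linear extension of `Rval` from monomials. -/
def Rop {n : ℕ} (i : ℕ) (h : i + 1 < n) : Pn n →ₗ[F] Pn n :=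
  (basisMonomials (Fin n) F).constr F (Rval i h)

/-- Value of `R*_i` on the monomial with exponent vector `d`. -/
def Rstarval {n : ℕ} (i : ℕ) (h : i + 1 < n) (d : Fin n →₀ ℕ) : Pn n :=
  if d ⟨i + 1, h⟩ ≤ d ⟨i, by omega⟩ then monomial (swapIdx n i h d) (1 : F)
  else (1 - q) • monomial d (1 : F) + q • monomial (swapIdx n i h d) (1 : F)

/-- The operator `R*_i`, the linear extension of `Rstarval` from monomials. -/
def Rstarop {n : ℕ} (i : ℕ) (h : i + 1 < n) : Pn n →ₗ[F] Pn n :=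
  (basisMonomials (Fin n) F).constr F (Rstarval i h)

/-- `f` is a symmetric polynomial. -/
def symmP {n : ℕ} (f : Pn n) : Prop :=
  ∀ σ : Equiv.Perm (Fin n), rename (⇑σ) f = f

/-- The ideal `I_n` generated by symmetric polynomials with zero constant term. -/
def In (n : ℕ) : Ideal (Pn n) :=
  Ideal.span {f : Pn n | symmP f ∧ constantCoeff f = 0}

/-- The quotient map `P_n → P_n / I_n` as an `F`-linear map. -/
def mkI (n : ℕ) : Pn n →ₗ[F] (Pn n ⧸ In n) :=
  (Ideal.Quotient.mkₐ F (In n)).toLinearMap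

/-- `R^k`: the image in `P_n/I_n` of the homogeneous polynomials of degree `k`. -/
def RkSub (n k : ℕ) : Submodule F (Pn n ⧸ In n) :=
  Submodule.map (mkI n) (homogeneousSubmodule (Fin n) F k)

/-- The Coxeter length of a permutation: its number of inversions. -/
def len {n : ℕ} (w : Equiv.Perm (Fin n)) : ℕ :=
  (Finset.univ.filter (fun p : Fin n × Fin n => p.1 < p.2 ∧ w p.2 < w p.1)).card

/-- The staircase monomial `x_1^{n-1} x_2^{n-2} ⋯ x_{n-1}`. -/
def staircase (n : ℕ) : Pn n := ∏ j : Fin n, (X j : Pn n) ^ (n - 1 - (j : ℕ))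

/-- `S` is the family of Schubert polynomials: `S w₀` is the staircase monomial, and
`∂_i 𝔖_w = 𝔖_{w s_i}` whenever `ℓ(w s_i) < ℓ(w)`.  This determines `S` uniquely. -/
def IsSchubert {n : ℕ} (dd : DDFam n) (S : Equiv.Perm (Fin n) → Pn n) : Prop :=
  S (Fin.revPerm) = staircase n ∧
  ∀ (w : Equiv.Perm (Fin n)) (i : ℕ) (h : i + 1 < n),
    len (w * transp n i h) < len w → dd i h (S w) = S (w * transp n i h)

/-- The 3-cycle `(a, b, c)`, sending `a ↦ b`, `b ↦ c`, `c ↦ a`. -/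
def cyc3 {n : ℕ} (a b c : Fin n) : Equiv.Perm (Fin n) :=
  Equiv.swap a c * Equiv.swap a b

/-- The Hecke algebra relations for a family of operators. -/
def HeckeRels {n : ℕ} (T : ∀ i : ℕ, i + 1 < n → (Pn n →ₗ[F] Pn n)) : Prop :=
  (∀ (i : ℕ) (h : i + 2 < n),
      T i (by omega) ∘ₗ (T (i + 1) (by omega) ∘ₗ T i (by omega))
        = T (i + 1) (by omega) ∘ₗ (T i (by omega) ∘ₗ T (i + 1) (by omega))) ∧
  (∀ (i j : ℕ) (hi : i + 1 < n) (hj : j + 1 < n), (i + 1 < j ∨ j + 1 < i) →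
      T i hi ∘ₗ T j hj = T j hj ∘ₗ T i hi) ∧
  (∀ (i : ℕ) (h : i + 1 < n),
      T i h ∘ₗ T i h = (1 - q) • T i h + q • LinearMap.id)

/-- Composition `T_{j₁} ∘ T_{j₂} ∘ ⋯ ∘ T_{j_k}` along a list of indices. -/
def compFam {n : ℕ} (T : ℕ → (Pn n →ₗ[F] Pn n)) : List ℕ → (Pn n →ₗ[F] Pn n)
  | [] => LinearMap.id
  | j :: l => T j ∘ₗ compFam T l

/-- Totalized version of `Aop` (identity outside the allowed index range). -/
def Atot {n : ℕ} (dd : DDFam n) (j : ℕ) : Pn n →ₗ[F] Pn n :=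
  if h : j + 1 < n then Aop dd j h else LinearMap.id

/-- Totalized version of `Rop` (identity outside the allowed index range). -/
def Rtot (n : ℕ) (j : ℕ) : Pn n →ₗ[F] Pn n :=
  if h : j + 1 < n then Rop j h else LinearMap.id

/-- The (0-indexed) index set `J_μ`: all `j ∈ {0, …, n-2}` such that `j+1` is not a
partial sum `μ_1 + ⋯ + μ_k` of the partition. -/
def Jlist (n : ℕ) (μ : List ℕ) : List ℕ :=
  (List.range (n - 1)).filter
    (fun j => (List.range (μ.length + 1)).all (fun k => (μ.take k).sum != j + 1))

/-- The value `w(a)` of a permutation, as a function on naturals. -/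
def permVal {n : ℕ} (w : Equiv.Perm (Fin n)) (a : ℕ) : ℕ :=
  if h : a < n then ((w ⟨a, h⟩ : Fin n) : ℕ) else a

open scoped Classical in
/-- The factor `m_q` attached to the block of positions `p, p+1, …, p+m-1`:
`(-q)^j` if, within the block, `w` has descents exactly at the first `j` places
(i.e. `w` decreases on the first `j+1` entries and then increases), and `0` otherwise. -/
def blockWeight {n : ℕ} (w : Equiv.Perm (Fin n)) (p m : ℕ) : F :=
  if h : ∃ j, j < m ∧ ∀ a : ℕ, p ≤ a → a + 1 < p + m →
      (permVal w (a + 1) < permVal w a ↔ a < p + j)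
  then (-q) ^ h.choose else 0

/-- `weight_q^μ(w) = ∏ m_q(w_i)`, the product of the block factors over the blocks of `μ`. -/
def weightq {n : ℕ} (μ : List ℕ) (w : Equiv.Perm (Fin n)) : F :=
  ∏ t ∈ Finset.range μ.length, blockWeight w ((μ.take t).sum) (μ.getD t 0)

/-- `μ` is a partition of `n`. -/
def IsPartition (n : ℕ) (μ : List ℕ) : Prop :=
  List.Pairwise (· ≥ ·) μ ∧ (∀ x ∈ μ, 0 < x) ∧ μ.sum = n

/-- The operator `D_i f = c_i · f + P_i(x_i, x_{i+1}) · ∂_i f`. -/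
def Dop {n : ℕ} (dd : DDFam n) (c : ℕ → F) (Pp : ℕ → MvPolynomial (Fin 2) F)
    (i : ℕ) (h : i + 1 < n) : Pn n →ₗ[F] Pn n :=
  c i • LinearMap.id +
    LinearMap.mulLeft F (aeval ![(X ⟨i, by omega⟩ : Pn n), X ⟨i + 1, h⟩] (Pp i)) ∘ₗ dd i h

/-- `f` has integer coefficients. -/
def IsIntPoly {n : ℕ} (f : Pn n) : Prop :=
  ∀ d : Fin n →₀ ℕ, ∃ z : ℤ, coeff d f = (z : F)

/-
From `(x_i - x_{i+1}) ∂_i f = f - s_i f` one gets the twisted Leibniz rule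
`∂_i (x_i g) = g + x_{i+1} ∂_i g`, whence `A_i f = f + (x_{i+1} - q x_i) ∂_i f`; as `P_n` is
a domain, `A_i f = f` iff `∂_i f = 0` iff `s_i f = f`. For `R_i`, comparing coefficients gives
`[x^e] (R_i f) - [x^e] f = c_e ([x^{s_i e}] f - [x^e] f)` with `c_e ∈ {1, q}` nonzero, and
`s_i f = f` says precisely that `[x^{s_i e}] f = [x^e] f` for all `e`.
-/

theorem MvPolynomial.coeff_rename_equiv {σ τ R : Type*} [CommSemiring R] (e : σ ≃ τ)
    (p : MvPolynomial σ R) (d : τ →₀ ℕ) :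
    coeff d (rename e p) = coeff (d.equivMapDomain e.symm) p := by
  have hd : (d.equivMapDomain e.symm).mapDomain e = d := by
    rw [← Finsupp.equivMapDomain_eq_mapDomain, ← Finsupp.equivMapDomain_trans,
      Equiv.symm_trans_self, Finsupp.equivMapDomain_refl]
  rw [← coeff_rename_mapDomain e e.injective p, hd]

theorem MvPolynomial.X_sub_C_mul_X_ne_zero {σ R : Type*} [CommRing R] [Nontrivial R]
    {a b : σ} (hab : a ≠ b) (c : R) : (X a - C c * X b : MvPolynomial σ R) ≠ 0 := by
  classical
  intro h0
  have := congrArg (coeff (Finsupp.single a 1)) h0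
  simp [coeff_X, coeff_C_mul, Finsupp.single_left_inj, hab.symm] at this

lemma q_ne_zero : q ≠ 0 := RatFunc.X_ne_zero

section Transposition

variable {n i : ℕ} (h : i + 1 < n)

lemma transp_apply_left : transp n i h ⟨i, by omega⟩ = ⟨i + 1, h⟩ :=
  Equiv.swap_apply_left _ _

lemma X_sub_X_ne_zero : (X ⟨i, by omega⟩ - X ⟨i + 1, h⟩ : Pn n) ≠ 0 :=
  sub_ne_zero.2 (X_injective.ne (by simp [Fin.ext_iff]))

lemma swapIdx_apply_left (d : Fin n →₀ ℕ) :
    swapIdx n i h d ⟨i, by omega⟩ = d ⟨i + 1, h⟩ := by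
  simp [swapIdx, transp, Finsupp.equivMapDomain_apply]

lemma swapIdx_apply_right (d : Fin n →₀ ℕ) :
    swapIdx n i h d ⟨i + 1, h⟩ = d ⟨i, by omega⟩ := by
  simp [swapIdx, transp, Finsupp.equivMapDomain_apply]

lemma swapIdx_swapIdx (d : Fin n →₀ ℕ) : swapIdx n i h (swapIdx n i h d) = d := by
  ext x
  simp [swapIdx, transp, Finsupp.equivMapDomain_apply]

lemma swapIdx_eq_self_iff (d : Fin n →₀ ℕ) :
    swapIdx n i h d = d ↔ d ⟨i, by omega⟩ = d ⟨i + 1, h⟩ := by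
  refine ⟨fun hd => by rw [← swapIdx_apply_left h d, hd], fun hd => ?_⟩
  ext x
  simp only [swapIdx, transp, Finsupp.equivMapDomain_apply, Equiv.symm_swap]
  rcases eq_or_ne x ⟨i, by omega⟩ with rfl | hx
  · rw [Equiv.swap_apply_left, hd]
  rcases eq_or_ne x ⟨i + 1, h⟩ with rfl | hx'
  · rw [Equiv.swap_apply_right, hd]
  · rw [Equiv.swap_apply_of_ne_of_ne hx hx']

lemma self_eq_swapIdx_iff (d : Fin n →₀ ℕ) :
    d = swapIdx n i h d ↔ d ⟨i, by omega⟩ = d ⟨i + 1, h⟩ := by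
  rw [eq_comm, swapIdx_eq_self_iff]

lemma eq_swapIdx_iff (d e : Fin n →₀ ℕ) : d = swapIdx n i h e ↔ swapIdx n i h d = e := by
  constructor <;> rintro rfl <;> rw [swapIdx_swapIdx]

lemma coeff_rename_transp (f : Pn n) (e : Fin n →₀ ℕ) :
    coeff e (rename (transp n i h) f) = coeff (swapIdx n i h e) f := by
  rw [coeff_rename_equiv]
  rfl

lemma rename_transp_eq_self_iff (f : Pn n) :
    rename (transp n i h) f = f ↔ ∀ e, coeff (swapIdx n i h e) f = coeff e f := by
  simp only [MvPolynomial.ext_iff, coeff_rename_transp]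

end Transposition

section DividedDifference

variable {n : ℕ} {dd : DDFam n} (hdd : IsDD dd) {i : ℕ} (h : i + 1 < n)
include hdd

lemma IsDD.apply_eq_zero_iff (f : Pn n) : dd i h f = 0 ↔ rename (transp n i h) f = f := by
  rw [← mul_eq_zero_iff_left (X_sub_X_ne_zero h), hdd, sub_eq_zero, eq_comm]

lemma IsDD.apply_X_mul (g : Pn n) :
    dd i h (X ⟨i, by omega⟩ * g) = g + X ⟨i + 1, h⟩ * dd i h g := by
  apply mul_left_cancel₀ (X_sub_X_ne_zero h)
  rw [hdd, map_mul, rename_X, transp_apply_left, mul_add, mul_left_comm, hdd]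
  ring

lemma IsDD.Aop_apply (g : Pn n) :
    Aop dd i h g = g + (X ⟨i + 1, h⟩ - C q * X ⟨i, by omega⟩) * dd i h g := by
  change dd i h (X ⟨i, by omega⟩ * g) - q • (X ⟨i, by omega⟩ * dd i h g) = _
  rw [hdd.apply_X_mul, smul_eq_C_mul]
  ring

lemma IsDD.Aop_eq_self_iff (f : Pn n) : Aop dd i h f = f ↔ rename (transp n i h) f = f := by
  rw [hdd.Aop_apply, add_eq_left,
    mul_eq_zero_iff_left (X_sub_C_mul_X_ne_zero (by simp [Fin.ext_iff]) q), hdd.apply_eq_zero_iff]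

end DividedDifference

section RopCoefficients

variable {n i : ℕ} (h : i + 1 < n)

lemma Rop_monomial (d : Fin n →₀ ℕ) (r : F) : Rop i h (monomial d r) = r • Rval i h d := by
  have hm : (monomial d r : Pn n) = r • basisMonomials (Fin n) F d := by
    rw [coe_basisMonomials, smul_monomial, smul_eq_mul, mul_one]
  rw [Rop, hm, map_smul, Module.Basis.constr_basis]

/-- On the diagonal `e_i = e_{i+1}` we have `s_i e = e`, so there the correction term vanishes
whatever the factor. -/
lemma coeff_Rop (f : Pn n) (e : Fin n →₀ ℕ) :
    coeff e (Rop i h f) = coeff e f +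
      (if e ⟨i, by omega⟩ < e ⟨i + 1, h⟩ then q else 1) *
        (coeff (swapIdx n i h e) f - coeff e f) := by
  induction f using MvPolynomial.induction_on' with
  | add p p' hp hp' => rw [map_add, coeff_add, hp, hp', coeff_add, coeff_add]; ring
  | monomial d r =>
    rw [Rop_monomial, coeff_smul, smul_eq_mul]
    obtain ⟨hd, hsd⟩ | rfl | rfl :
        (d ≠ e ∧ swapIdx n i h d ≠ e) ∨ e = d ∨ e = swapIdx n i h d := by tauto
    · rw [Rval]
      split_ifs <;> simp [coeff_monomial, eq_swapIdx_iff, hd, hsd]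
    all_goals
      rw [Rval]
      split_ifs <;>
      simp only [coeff_monomial, coeff_add, coeff_smul, smul_eq_mul, swapIdx_swapIdx,
        swapIdx_apply_left, swapIdx_apply_right, swapIdx_eq_self_iff, self_eq_swapIdx_iff] at * <;>
      split_ifs <;> first | ring1 | order

lemma Rop_eq_self_iff (f : Pn n) :
    Rop i h f = f ↔ ∀ e, coeff (swapIdx n i h e) f = coeff e f := by
  rw [MvPolynomial.ext_iff]
  refine forall_congr' fun e => ?_
  have hc : (if e ⟨i, by omega⟩ < e ⟨i + 1, h⟩ then q else 1) ≠ 0 := by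
    split_ifs
    exacts [q_ne_zero, one_ne_zero]
  rw [coeff_Rop, add_eq_left, mul_eq_zero_iff_left hc, sub_eq_zero]

end RopCoefficients

theorem stmt10_general (n : ℕ) (dd : DDFam n) (hdd : IsDD dd)
    (i : ℕ) (h : i + 1 < n) (f : Pn n) :
    (Aop dd i h f = f ↔ rename (⇑(transp n i h)) f = f) ∧
    (Rop i h f = f ↔ rename (⇑(transp n i h)) f = f) :=
  ⟨hdd.Aop_eq_self_iff h f, (Rop_eq_self_iff h f).trans (rename_transp_eq_self_iff h f).symm⟩

/-- `A_i` and `R_i` have the same invariant vectors, namely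
the `i`-symmetric polynomials. -/
theorem stmt10 (n : ℕ) (hn : 2 ≤ n) (dd : DDFam n) (hdd : IsDD dd)
    (i : ℕ) (h : i + 1 < n) (f : Pn n) :
    (Aop dd i h f = f ↔ rename (⇑(transp n i h)) f = f) ∧
    (Rop i h f = f ↔ rename (⇑(transp n i h)) f = f) :=
  stmt10_general n dd hdd i h f
end
end

section
/- Let 1 ≤ i ≤ n−1 and let w ∈ S_n satisfy ℓ(w·s_i) < ℓ(w). Then for every v ∈ S_n, the coefficient of 𝔖_w in the Schubert-basis expansion of the image of A_i(𝔖_v) in P_n/I_n equals −q if v = w, and equals 0 if v ≠ w. -/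
open MvPolynomial

noncomputable section

/-!
Since `∂_i² = 0` and `∂_i(x_i g) = g + x_{i+1} ∂_i g`, one gets `∂_i ∘ A_i = -q · ∂_i`.
The operator `∂_i` preserves `I_n` and sends `𝔖_u` to `𝔖_{u s_i}` or to `0` according as
`u` has a descent at `i` or not; as `u ↦ u s_i` is injective, for `w` with a descent at `i`
the coefficient of `𝔖_w` in a class equals the coefficient of `𝔖_{w s_i}` in its image under `∂_i`.  Hence the coefficient
of `𝔖_w` in `A_i 𝔖_v` is `-q` times the coefficient of `𝔖_w` in `𝔖_v`.
-/

section DividedDifference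

variable {n : ℕ} (i : ℕ) (h : i + 1 < n)

theorem X_sub_X_succ_ne_zero : (X (⟨i, by omega⟩ : Fin n) - X ⟨i + 1, h⟩ : Pn n) ≠ 0 :=
  sub_ne_zero.mpr fun hX => by simpa [Fin.ext_iff] using X_injective hX

theorem rename_transp_rename_transp (f : Pn n) :
    rename (transp n i h) (rename (transp n i h) f) = f := by
  rw [rename_rename, ← Equiv.Perm.coe_mul, transp, Equiv.swap_mul_self, Equiv.Perm.coe_one,
    rename_id, AlgHom.id_apply]

namespace IsDD

variable {dd : DDFam n} (hdd : IsDD dd)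
include hdd

theorem apply_eq_zero_of_rename_eq {f : Pn n} (hf : rename (transp n i h) f = f) :
    dd i h f = 0 := by
  have hf' := hdd i h f
  rw [hf, sub_self] at hf'
  exact (mul_eq_zero.mp hf').resolve_left (X_sub_X_succ_ne_zero i h)

theorem mul_apply (p f : Pn n) :
    dd i h (p * f) = dd i h p * f + rename (transp n i h) p * dd i h f := by
  apply mul_left_cancel₀ (X_sub_X_succ_ne_zero i h)
  have hpf := hdd i h (p * f)
  rw [map_mul (rename _)] at hpf
  linear_combination hpf - f * hdd i h p - rename (transp n i h) p * hdd i h f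

theorem rename_apply (f : Pn n) : rename (transp n i h) (dd i h f) = dd i h f := by
  apply mul_left_cancel₀ (X_sub_X_succ_ne_zero i h)
  have hs := congrArg (rename (transp n i h)) (hdd i h f)
  rw [map_mul, map_sub, map_sub, rename_X, rename_X, transp, Equiv.swap_apply_left,
    Equiv.swap_apply_right, ← transp, rename_transp_rename_transp] at hs
  linear_combination -hs - hdd i h f

theorem apply_apply (f : Pn n) : dd i h (dd i h f) = 0 :=
  hdd.apply_eq_zero_of_rename_eq i h (hdd.rename_apply i h f)

theorem apply_X : dd i h (X ⟨i, by omega⟩) = 1 := by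
  apply mul_left_cancel₀ (X_sub_X_succ_ne_zero i h)
  rw [hdd i h, rename_X, transp, Equiv.swap_apply_left, mul_one]

theorem apply_Aop (f : Pn n) : dd i h (Aop dd i h f) = (-q) • dd i h f := by
  have hA : Aop dd i h f =
      dd i h (X ⟨i, by omega⟩ * f) - q • (X (⟨i, by omega⟩ : Fin n) * dd i h f) := rfl
  rw [hA, map_sub, map_smul, hdd.apply_apply, hdd.mul_apply, hdd.apply_X, hdd.apply_apply,
    mul_zero, add_zero, one_mul, zero_sub, neg_smul]

theorem apply_mem_In {f : Pn n} (hf : f ∈ In n) : dd i h f ∈ In n := by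
  induction hf using Submodule.span_induction with
  | mem g hg => rw [hdd.apply_eq_zero_of_rename_eq i h (hg.1 _)]; exact zero_mem _
  | zero => rw [map_zero]; exact zero_mem _
  | add x y _ _ hx hy => rw [map_add]; exact add_mem hx hy
  | smul r x hx ihx =>
    rw [smul_eq_mul, hdd.mul_apply]
    exact add_mem (Ideal.mul_mem_left _ _ hx) (Ideal.mul_mem_left _ _ ihx)

theorem mkI_apply_congr {f g : Pn n} (hfg : mkI n f = mkI n g) :
    mkI n (dd i h f) = mkI n (dd i h g) := by
  simp only [mkI, AlgHom.toLinearMap_apply, Ideal.Quotient.mkₐ_eq_mk,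
    Ideal.Quotient.eq] at hfg ⊢
  simpa only [map_sub] using hdd.apply_mem_In i h hfg

end IsDD

end DividedDifference

section Length

variable {n : ℕ}

theorem signAux_eq_neg_one_pow_len (u : Equiv.Perm (Fin n)) :
    Equiv.Perm.signAux u = (-1 : ℤˣ) ^ len u := by
  rw [Equiv.Perm.signAux, ← Finset.prod_filter, Finset.prod_const]
  congr 1
  refine Finset.card_bij (fun x _ => (x.2, x.1)) ?_ ?_ ?_
  · intro x hx
    simp only [Finset.mem_filter, Equiv.Perm.mem_finPairsLT] at hx
    simp only [Finset.mem_filter, Finset.mem_univ, true_and]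
    exact ⟨hx.1, hx.2.lt_of_ne fun hu => (u.injective hu ▸ hx.1).ne rfl⟩
  · intro x _ y _ hxy
    simp only [Prod.mk.injEq] at hxy
    exact Sigma.ext hxy.2 (heq_of_eq hxy.1)
  · intro p hp
    simp only [Finset.mem_filter, Finset.mem_univ, true_and] at hp
    exact ⟨⟨p.2, p.1⟩, by simpa [Equiv.Perm.mem_finPairsLT] using ⟨hp.1, hp.2.le⟩, rfl⟩

theorem len_mul_transp_ne (i : ℕ) (h : i + 1 < n) (u : Equiv.Perm (Fin n)) :
    len (u * transp n i h) ≠ len u := by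
  have hsign : Equiv.Perm.signAux (u * transp n i h) = -Equiv.Perm.signAux u := by
    rw [Equiv.Perm.signAux_mul, transp, Equiv.Perm.signAux_swap (by simp [Fin.ext_iff]),
      mul_neg_one]
  intro hlen
  rw [signAux_eq_neg_one_pow_len, signAux_eq_neg_one_pow_len, hlen] at hsign
  rcases Int.units_eq_one_or ((-1 : ℤˣ) ^ len u) with h1 | h1 <;> rw [h1] at hsign <;>
    exact absurd hsign (by decide)

end Length

section Schubert

variable {n : ℕ} {dd : DDFam n} {S : Equiv.Perm (Fin n) → Pn n} (i : ℕ) (h : i + 1 < n)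

theorem IsSchubert.dd_apply (hdd : IsDD dd) (hS : IsSchubert dd S) (u : Equiv.Perm (Fin n)) :
    dd i h (S u) = if len (u * transp n i h) < len u then S (u * transp n i h) else 0 := by
  split_ifs with hu
  · exact hS.2 u i h hu
  · have hut : u * transp n i h * transp n i h = u := by
      rw [mul_assoc, transp, Equiv.swap_mul_self, mul_one]
    have hlt : len (u * transp n i h * transp n i h) < len (u * transp n i h) := by
      rw [hut]; exact (not_lt.mp hu).lt_of_ne' (len_mul_transp_ne i h u)
    rw [← hut, ← hS.2 _ i h hlt, hdd.apply_apply]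

variable {B : Module.Basis (Equiv.Perm (Fin n)) F (Pn n ⧸ In n)}

theorem repr_mkI_dd_apply_schubert (hdd : IsDD dd) (hS : IsSchubert dd S)
    (hB : ∀ v, B v = mkI n (S v)) {w : Equiv.Perm (Fin n)}
    (hw : len (w * transp n i h) < len w) (u : Equiv.Perm (Fin n)) :
    B.repr (mkI n (dd i h (S u))) (w * transp n i h) = B.repr (mkI n (S u)) w := by
  rw [hS.dd_apply i h hdd, ← hB]
  by_cases huw : u = w
  · subst huw
    rw [if_pos hw, ← hB, B.repr_self, B.repr_self, Finsupp.single_eq_same,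
      Finsupp.single_eq_same]
  · rw [B.repr_self, Finsupp.single_eq_of_ne (Ne.symm huw)]
    split_ifs
    · rw [← hB, B.repr_self,
        Finsupp.single_eq_of_ne ((mul_left_injective _).ne (Ne.symm huw))]
    · simp

theorem repr_mkI_dd_apply (hdd : IsDD dd) (hS : IsSchubert dd S)
    (hB : ∀ v, B v = mkI n (S v)) {w : Equiv.Perm (Fin n)}
    (hw : len (w * transp n i h) < len w) (f : Pn n) :
    B.repr (mkI n (dd i h f)) (w * transp n i h) = B.repr (mkI n f) w := by
  set c := B.repr (mkI n f)
  have hf : mkI n f = mkI n (∑ u, c u • S u) := by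
    simp only [c, map_sum, map_smul, ← hB, B.sum_repr]
  rw [hdd.mkI_apply_congr i h hf, show c w = B.repr (mkI n f) w from rfl, hf]
  simp only [map_sum, map_smul, Finset.sum_apply', Finsupp.smul_apply,
    repr_mkI_dd_apply_schubert i h hdd hS hB hw]

end Schubert

theorem stmt19_general (n : ℕ) (dd : DDFam n) (hdd : IsDD dd)
    (S : Equiv.Perm (Fin n) → Pn n) (hS : IsSchubert dd S)
    (B : Module.Basis (Equiv.Perm (Fin n)) F (Pn n ⧸ In n)) (hB : ∀ v, B v = mkI n (S v))
    (i : ℕ) (h : i + 1 < n) (w : Equiv.Perm (Fin n))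
    (hw : len (w * transp n i h) < len w) (v : Equiv.Perm (Fin n)) :
    B.repr (mkI n (Aop dd i h (S v))) w = if v = w then -q else 0 := by
  calc B.repr (mkI n (Aop dd i h (S v))) w
      = B.repr (mkI n (dd i h (Aop dd i h (S v)))) (w * transp n i h) :=
        (repr_mkI_dd_apply i h hdd hS hB hw _).symm
    _ = -q * B.repr (mkI n (dd i h (S v))) (w * transp n i h) := by
        rw [hdd.apply_Aop, map_smul, map_smul, Finsupp.smul_apply, smul_eq_mul]
    _ = -q * B.repr (B v) w := by rw [repr_mkI_dd_apply i h hdd hS hB hw, hB]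
    _ = if v = w then -q else 0 := by
        rw [B.repr_self, Finsupp.single_apply]
        split_ifs <;> simp

/-- the coefficient of `𝔖_w` in `A_i 𝔖_v` (mod `I_n`) equals `-q` if
`v = w` and `0` otherwise, whenever `ℓ(w s_i) < ℓ(w)`. -/
theorem stmt19 (n : ℕ) (hn : 2 ≤ n) (dd : DDFam n) (hdd : IsDD dd)
    (S : Equiv.Perm (Fin n) → Pn n) (hS : IsSchubert dd S)
    (B : Module.Basis (Equiv.Perm (Fin n)) F (Pn n ⧸ In n)) (hB : ∀ v, B v = mkI n (S v))
    (i : ℕ) (h : i + 1 < n) (w : Equiv.Perm (Fin n))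
    (hw : len (w * transp n i h) < len w) (v : Equiv.Perm (Fin n)) :
    B.repr (mkI n (Aop dd i h (S v))) w = if v = w then -q else 0 :=
  stmt19_general n dd hdd S hS B hB i h w hw v

end
end
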